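/- arXiv:2508.17525 — 9 statements merged into one kernel-verified Lean document; each statement's English description precedes it below -/
import Mathlib

section
/- If x is a dataset of n real numbers in [0,1] that maximizes the variance among all datasets in [0,1]^n with mean equal to c, then at most one entry x_i satisfies 0 < x_i < 1. -/
/-- If `x` maximizes the variance among datasets in `[0,1]^n` with mean `c`,
then at most one entry satisfies `0 < x i < 1`. -/
theorem stmt_0 (n : ℕ) (hn : 0 < n) (c : ℝ) (x : Fin n → ℝ)
    (hx : ∀ i, x i ∈ Set.Icc (0:ℝ) 1)
    (hmean : (∑ i, x i) / n = c)
    (hmax : ∀ y : Fin n → ℝ, (∀ i, y i ∈ Set.Icc (0:ℝ) 1) → (∑ i, y i) / n = c →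
      (∑ i, (y i - (∑ j, y j) / n) ^ 2) / n ≤ (∑ i, (x i - (∑ j, x j) / n) ^ 2) / n) :
    ∀ i j : Fin n, 0 < x i → x i < 1 → 0 < x j → x j < 1 → i = j := by
  have hn' : (0:ℝ) < n := by exact_mod_cast hn
  have key : ∀ i j : Fin n, i ≠ j → 0 < x i → x i < 1 → 0 < x j → x j < 1 →
      x j ≤ x i → False := by
    intro i j hne hi0 hi1 hj0 hj1 hle
    set ε := min (1 - x i) (x j) with hε
    have hε0 : 0 < ε := lt_min (by linarith) hj0
    have hεi : x i + ε ≤ 1 := by have := min_le_left (1 - x i) (x j); linarith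
    have hεj : 0 ≤ x j - ε := by have := min_le_right (1 - x i) (x j); linarith
    set y : Fin n → ℝ := fun k => if k = i then x i + ε else if k = j then x j - ε else x k
      with hy
    have hsum : ∑ k, y k = ∑ k, x k := by
      have h1 : ∀ k, y k = x k + ((if k = i then ε else 0) + (if k = j then -ε else 0)) := by
        intro k
        simp only [hy]
        split_ifs with h1 h2 h3
        · exact absurd (h1.symm.trans h2) hne
        · subst h1; ring
        · subst h3; ring
        · ring
      rw [Finset.sum_congr rfl fun k _ => h1 k, Finset.sum_add_distrib,
        Finset.sum_add_distrib, Finset.sum_ite_eq', Finset.sum_ite_eq']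
      simp
    have hmem : ∀ k, y k ∈ Set.Icc (0:ℝ) 1 := by
      intro k
      simp only [hy]
      split_ifs with h1 h2
      · exact ⟨by linarith, hεi⟩
      · exact ⟨hεj, by linarith [(hx j).2]⟩
      · exact hx k
    have hmean' : (∑ k, y k) / n = c := by rw [hsum]; exact hmean
    have hsq : ∑ k, (y k - c)^2 = ∑ k, (x k - c)^2 + (2*ε*(x i - x j) + 2*ε^2) := by
      have h1 : ∀ k, (y k - c)^2 = (x k - c)^2 +
          ((if k = i then 2*ε*(x i - c) + ε^2 else 0) +
           (if k = j then -(2*ε*(x j - c)) + ε^2 else 0)) := by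
        intro k
        simp only [hy]
        split_ifs with h1 h2 h3
        · exact absurd (h1.symm.trans h2) hne
        · subst h1; ring
        · subst h3; ring
        · ring
      rw [Finset.sum_congr rfl fun k _ => h1 k, Finset.sum_add_distrib,
        Finset.sum_add_distrib, Finset.sum_ite_eq', Finset.sum_ite_eq']
      simp only [Finset.mem_univ, if_true]
      ring
    have hle' := hmax y hmem hmean'
    rw [hsum, hmean] at hle'
    rw [hsq] at hle'
    have hpos : 0 < 2*ε*(x i - x j) + 2*ε^2 := by nlinarith
    rw [div_le_div_iff₀ hn' hn'] at hle'
    nlinarith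
  intro i j hi0 hi1 hj0 hj1
  by_contra hne
  rcases le_total (x j) (x i) with h | h
  · exact key i j hne hi0 hi1 hj0 hj1 h
  · exact key j i (Ne.symm hne) hj0 hj1 hi0 hi1 h
end

section
/- If x is a dataset of n real numbers in [0,1] maximizing the variance subject to mean equal to c, and some entry x_s satisfies 0 < x_s < 1, then x_s equals the fractional part of n·c. -/
/-- Perturbation lemma: at a maximizer, we cannot have `x j ≤ x i` with `x i < 1`
and `0 < x j` for distinct `i j`, since moving mass from `j` to `i` increases variance. -/
lemma stmt_2_aux (n : ℕ) (hn : 0 < n) (c : ℝ) (x : Fin n → ℝ)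
    (hx : ∀ i, x i ∈ Set.Icc (0:ℝ) 1)
    (hmean : (∑ i, x i) / n = c)
    (hmax : ∀ y : Fin n → ℝ, (∀ i, y i ∈ Set.Icc (0:ℝ) 1) → (∑ i, y i) / n = c →
      (∑ i, (y i - c) ^ 2) / n ≤ (∑ i, (x i - c) ^ 2) / n)
    (i j : Fin n) (hij : i ≠ j) (hle : x j ≤ x i) (hi1 : x i < 1) (hj0 : 0 < x j) :
    False := by
  set ε : ℝ := min (1 - x i) (x j) / 2 with hε
  have hεpos : 0 < ε := by
    have : 0 < min (1 - x i) (x j) := lt_min (by linarith) hj0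
    positivity
  have hε1 : ε ≤ (1 - x i) / 2 := by
    apply div_le_div_of_nonneg_right (min_le_left _ _) (by norm_num)
  have hε2 : ε ≤ x j / 2 := by
    apply div_le_div_of_nonneg_right (min_le_right _ _) (by norm_num)
  set y : Fin n → ℝ := fun k => x k + (if k = i then ε else 0) + (if k = j then -ε else 0)
    with hy
  have hyb : ∀ k, y k ∈ Set.Icc (0:ℝ) 1 := by
    intro k
    obtain ⟨hk0, hk1⟩ := hx k
    by_cases hk : k = i <;> by_cases hk' : k = j
    · exact absurd (hk.symm.trans hk') hij
    · subst hk; constructor <;> simp [hy, hij] <;> linarith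
    · subst hk'; constructor <;> simp [hy, Ne.symm hij] <;> linarith
    · constructor <;> simp [hy, hk, hk'] <;> linarith
  have hsum : ∑ k, y k = ∑ k, x k := by
    simp [hy, Finset.sum_add_distrib]
  have hvar : ∑ k, (y k - c) ^ 2 = ∑ k, (x k - c) ^ 2
      + ((x i + ε - c) ^ 2 - (x i - c) ^ 2) + ((x j - ε - c) ^ 2 - (x j - c) ^ 2) := by
    have key : ∀ k, (y k - c) ^ 2 = (x k - c) ^ 2
        + (if k = i then (x i + ε - c) ^ 2 - (x i - c) ^ 2 else 0)
        + (if k = j then (x j - ε - c) ^ 2 - (x j - c) ^ 2 else 0) := by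
      intro k
      by_cases hk : k = i <;> by_cases hk' : k = j
      · exact absurd (hk.symm.trans hk') hij
      · subst hk; simp [hy, hij]; try ring
      · subst hk'; simp [hy, Ne.symm hij]; try ring
      · simp [hy, hk, hk']
    rw [Finset.sum_congr rfl (fun k _ => key k)]
    simp [Finset.sum_add_distrib]
  have hle2 := hmax y hyb (by rw [hsum, hmean])
  have hnpos : (0:ℝ) < n := Nat.cast_pos.mpr hn
  have hle3 : ∑ k, (y k - c) ^ 2 ≤ ∑ k, (x k - c) ^ 2 :=
    (div_le_div_iff_of_pos_right hnpos).mp hle2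
  nlinarith [hεpos, hle]

/-- If `x` maximizes the variance among datasets in `[0,1]^n` with mean `c` and
some entry `x s` satisfies `0 < x s < 1`, then `x s` is the fractional part of `n * c`. -/
theorem stmt_2 (n : ℕ) (hn : 0 < n) (c : ℝ) (x : Fin n → ℝ)
    (hx : ∀ i, x i ∈ Set.Icc (0:ℝ) 1)
    (hmean : (∑ i, x i) / n = c)
    (hmax : ∀ y : Fin n → ℝ, (∀ i, y i ∈ Set.Icc (0:ℝ) 1) → (∑ i, y i) / n = c →
      (∑ i, (y i - c) ^ 2) / n ≤ (∑ i, (x i - c) ^ 2) / n)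
    (s : Fin n) (hs0 : 0 < x s) (hs1 : x s < 1) :
    x s = Int.fract (n * c) := by
  have hall : ∀ i, i ≠ s → x i = 0 ∨ x i = 1 := by
    intro i hi
    by_contra h
    push_neg at h
    obtain ⟨h0, h1⟩ := h
    obtain ⟨hi0, hi1⟩ := hx i
    have hi0' : 0 < x i := lt_of_le_of_ne hi0 (Ne.symm h0)
    have hi1' : x i < 1 := lt_of_le_of_ne hi1 h1
    rcases le_total (x i) (x s) with hle | hle
    · exact stmt_2_aux n hn c x hx hmean hmax s i (Ne.symm hi) hle hs1 hi0'
    · exact stmt_2_aux n hn c x hx hmean hmax i s hi hle hi1' hs0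
  have hsplit : ∑ i, x i = x s + ∑ i ∈ Finset.univ.erase s, x i := by
    rw [← Finset.add_sum_erase _ _ (Finset.mem_univ s)]
  have hint : ∑ i ∈ Finset.univ.erase s, x i
      = (((Finset.univ.erase s).filter (fun i => x i = 1)).card : ℝ) := by
    rw [← Finset.sum_boole]
    apply Finset.sum_congr rfl
    intro i hi
    rcases hall i (Finset.ne_of_mem_erase hi) with h | h <;> simp [h]
  have hnc : (n : ℝ) * c = ∑ i, x i := by
    rw [← hmean]
    field_simp
  rw [hnc, hsplit, hint, Int.fract_add_natCast, Int.fract_eq_self.mpr ⟨hs0.le, hs1⟩]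
end

section
/- The maximum of var(x) over all x ∈ [0,1]^n with mean c equals c(1-c) - a(1-a)/n, where a is the fractional part of n·c. -/
open Finset

private lemma two_step_aux (s t : ℝ) (hs0 : 0 ≤ s) (hs1 : s ≤ 1) (ht : 0 ≤ t) (ht1 : t < 1) :
    Int.fract (s + t) * (1 - Int.fract (s + t)) ≤ s * (1 - s) + t * (1 - t) := by
  rcases lt_or_ge (s + t) 1 with h | h
  · rw [Int.fract_eq_self.2 ⟨by linarith, h⟩]
    nlinarith
  · have heq : Int.fract (s + t) = s + t - 1 := by
      rw [show s + t = (s + t - 1) + 1 by ring, Int.fract_add_one,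
        Int.fract_eq_self.2 ⟨by linarith, by linarith⟩]
      ring
    rw [heq]
    nlinarith [mul_nonneg (by linarith : (0:ℝ) ≤ 1 - s) (by linarith : (0:ℝ) ≤ 1 - t)]

private lemma frac_sum_aux {ι : Type*} [DecidableEq ι] (x : ι → ℝ) (s : Finset ι)
    (h : ∀ i ∈ s, x i ∈ Set.Icc (0:ℝ) 1) :
    Int.fract (∑ i ∈ s, x i) * (1 - Int.fract (∑ i ∈ s, x i)) ≤ ∑ i ∈ s, x i * (1 - x i) := by
  induction s using Finset.induction_on with
  | empty => simp
  | @insert a s ha ih =>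
    rw [Finset.sum_insert ha, Finset.sum_insert ha]
    have hfr : Int.fract (x a + ∑ i ∈ s, x i)
        = Int.fract (x a + Int.fract (∑ i ∈ s, x i)) := by
      conv_lhs => rw [show x a + ∑ i ∈ s, x i
        = (x a + Int.fract (∑ i ∈ s, x i)) + ⌊∑ i ∈ s, x i⌋ by rw [Int.fract]; ring]
      rw [Int.fract_add_intCast]
    rw [hfr]
    have h1 := h a (Finset.mem_insert_self a s)
    have h2 := ih (fun i hi => h i (Finset.mem_insert_of_mem hi))
    calc Int.fract (x a + Int.fract (∑ i ∈ s, x i)) *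
          (1 - Int.fract (x a + Int.fract (∑ i ∈ s, x i)))
        ≤ x a * (1 - x a) + Int.fract (∑ i ∈ s, x i) * (1 - Int.fract (∑ i ∈ s, x i)) :=
          two_step_aux _ _ h1.1 h1.2 (Int.fract_nonneg _) (Int.fract_lt_one _)
      _ ≤ x a * (1 - x a) + ∑ i ∈ s, x i * (1 - x i) := by linarith

private lemma var_formula_aux (n : ℕ) (hn : (n:ℝ) ≠ 0) (x : Fin n → ℝ) (c : ℝ)
    (hc : (∑ i, x i) / n = c) :
    (∑ i, (x i - (∑ j, x j) / n) ^ 2) / n = (∑ i, x i ^ 2) / n - c ^ 2 := by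
  have hS : ∑ i, x i = n * c := by field_simp at hc; linarith
  have expand : ∑ i, (x i - c) ^ 2 = ∑ i, x i ^ 2 - 2 * c * (∑ i, x i) + n * c ^ 2 := by
    have h1 : ∀ i : Fin n, (x i - c) ^ 2 = x i ^ 2 - 2 * c * x i + c ^ 2 := fun i => by ring
    simp only [h1, Finset.sum_add_distrib, Finset.sum_sub_distrib, ← Finset.mul_sum,
      Finset.sum_const, Finset.card_univ, Fintype.card_fin, nsmul_eq_mul]
  rw [hc, expand, hS]
  field_simp
  ring

private lemma sum_helper_aux (n k : ℕ) (hkn : k ≤ n) (u v : ℝ) :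
    ∑ i : Fin n, (if (i:ℕ) < k then u else if (i:ℕ) = k then v else 0)
      = k * u + (if k < n then v else 0) := by
  rw [Fin.sum_univ_eq_sum_range (fun j => if j < k then u else if j = k then v else 0) n]
  have split : ∀ j, (if j < k then u else if j = k then v else 0)
      = (if j < k then u else 0) + (if j = k then v else 0) := by
    intro j
    split_ifs with h1 h2
    · exact absurd h2 (by omega)
    · ring
    · ring
    · ring
  rw [Finset.sum_congr rfl (fun j _ => split j), Finset.sum_add_distrib]
  congr 1
  · rw [← Finset.sum_filter, Finset.range_eq_Ico, Finset.Ico_filter_lt 0 n k,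
      min_eq_right hkn, ← Finset.range_eq_Ico, Finset.sum_const, Finset.card_range,
      nsmul_eq_mul]
  · rw [Finset.sum_ite_eq' (Finset.range n) k (fun _ => v)]
    simp [Finset.mem_range]

/-- The maximum of the variance over all `x ∈ [0,1]^n` with mean `c` equals
`c(1-c) - a(1-a)/n` where `a` is the fractional part of `n * c`. -/
theorem stmt_3 (n : ℕ) (hn : 1 ≤ n) (c : ℝ) (hc : c ∈ Set.Icc (0:ℝ) 1) :
    IsGreatest
      {v : ℝ | ∃ x : Fin n → ℝ, (∀ i, x i ∈ Set.Icc (0:ℝ) 1) ∧ (∑ i, x i) / n = c ∧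
        v = (∑ i, (x i - (∑ j, x j) / n) ^ 2) / n}
      (c * (1 - c) - Int.fract (n * c) * (1 - Int.fract (n * c)) / n) := by
  have hn0 : (0:ℝ) < n := by exact_mod_cast hn
  have hn' : (n:ℝ) ≠ 0 := ne_of_gt hn0
  obtain ⟨hc0, hc1⟩ := hc
  have hnc1 : (n:ℝ) * c ≤ n := by nlinarith
  have hnc0 : (0:ℝ) ≤ n * c := by positivity
  set a : ℝ := Int.fract (↑n * c) with ha
  have ha0 : 0 ≤ a := Int.fract_nonneg _
  have ha1 : a < 1 := Int.fract_lt_one _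
  set k : ℕ := (⌊(n:ℝ) * c⌋).toNat with hkdef
  have hk' : (k:ℝ) = n * c - a := by
    rw [hkdef, ha, Int.fract]
    rw [show ((⌊(n:ℝ)*c⌋.toNat : ℕ) : ℝ) = ((⌊(n:ℝ)*c⌋.toNat : ℤ) : ℝ) by push_cast; ring,
      Int.toNat_of_nonneg (Int.floor_nonneg.2 hnc0)]
    ring
  have hkn : k ≤ n := by
    have : (k:ℝ) ≤ (n:ℝ) := by rw [hk']; linarith
    exact_mod_cast this
  constructor
  · -- membership: the extremal vector
    set x : Fin n → ℝ := fun i => if (i:ℕ) < k then 1 else if (i:ℕ) = k then a else 0 with hx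
    have hxmem : ∀ i, x i ∈ Set.Icc (0:ℝ) 1 := by
      intro i
      rw [hx]
      dsimp only
      split_ifs
      · exact ⟨zero_le_one, le_refl 1⟩
      · exact ⟨ha0, le_of_lt ha1⟩
      · exact ⟨le_refl 0, zero_le_one⟩
    have hS : ∑ i, x i = n * c := by
      rw [hx, sum_helper_aux n k hkn 1 a]
      by_cases h : k < n
      · rw [if_pos h]; linarith
      · have hke : k = n := le_antisymm hkn (not_lt.1 h)
        have h1 : (k:ℝ) = n := by exact_mod_cast hke
        have hnck : (n:ℝ) * c = k := by linarith
        rw [if_neg h]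
        linarith
    have hmean : (∑ i, x i) / n = c := by rw [hS]; field_simp
    have hS2 : ∑ i, x i ^ 2 = n * c - a + a ^ 2 := by
      have hsq : ∀ i : Fin n, x i ^ 2
          = (if (i:ℕ) < k then (1:ℝ) else if (i:ℕ) = k then a ^ 2 else 0) := by
        intro i
        rw [hx]
        dsimp only
        split_ifs <;> simp
      rw [Finset.sum_congr rfl (fun i _ => hsq i), sum_helper_aux n k hkn 1 (a ^ 2)]
      by_cases h : k < n
      · rw [if_pos h]; linarith
      · have hke : k = n := le_antisymm hkn (not_lt.1 h)
        have hknR : (k:ℝ) = n := by exact_mod_cast hke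
        have haz : a = 0 := by linarith
        rw [if_neg h, haz]
        norm_num
        linarith
    refine ⟨x, hxmem, hmean, ?_⟩
    rw [var_formula_aux n hn' x c hmean, hS2]
    field_simp
    ring
  · -- upper bound
    rintro v ⟨x, hx, hmean, rfl⟩
    rw [var_formula_aux n hn' x c hmean]
    have hS : ∑ i, x i = n * c := by field_simp at hmean; linarith
    have hfr := frac_sum_aux x Finset.univ (fun i _ => hx i)
    rw [hS] at hfr
    have h2 : ∑ i, x i * (1 - x i) = n * c - ∑ i, x i ^ 2 := by
      have h1 : ∀ i : Fin n, x i * (1 - x i) = x i - x i ^ 2 := fun i => by ring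
      rw [Finset.sum_congr rfl (fun i _ => h1 i), Finset.sum_sub_distrib, hS]
    have h3 : ∑ i, x i ^ 2 ≤ n * c - a * (1 - a) := by rw [← ha] at hfr; linarith
    rw [show c * (1 - c) - a * (1 - a) / n = (n * c - a * (1 - a)) / n - c ^ 2 by
      field_simp; ring]
    gcongr
end

section
/- For every x ∈ [0,1]^n with mean c, var(x) ≤ c(1-c) - a(1-a)/n, where a is the fractional part of n·c. -/
noncomputable def phi (t : ℝ) : ℝ := Int.fract t * (1 - Int.fract t)

lemma phi_subadd (s t : ℝ) : phi (s + t) ≤ phi s + phi t := by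
  have hu0 := Int.fract_nonneg s
  have hu1 := Int.fract_lt_one s
  have hv0 := Int.fract_nonneg t
  have hv1 := Int.fract_lt_one t
  set u := Int.fract s with hu
  set v := Int.fract t with hv
  have hst : Int.fract (s + t) = Int.fract (u + v) := by
    have : s + t = (↑(⌊s⌋ + ⌊t⌋) : ℝ) + (u + v) := by
      push_cast [hu, hv, Int.fract]; ring
    rw [this, Int.fract_intCast_add]
  rcases lt_or_ge (u + v) 1 with h | h
  · have : Int.fract (u + v) = u + v := Int.fract_eq_self.2 ⟨by linarith, h⟩
    unfold phi; rw [hst, this]; nlinarith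
  · have : Int.fract (u + v) = u + v - 1 := by
      have : Int.fract (u + v) = Int.fract (u + v - 1) := by
        rw [show u + v - 1 = u + v + (-1 : ℤ) by push_cast; ring, Int.fract_add_intCast]
      rw [this, Int.fract_eq_self.2 ⟨by linarith, by linarith⟩]
    unfold phi; rw [hst, this]; nlinarith [mul_nonneg (by linarith : (0:ℝ) ≤ 1 - u) (by linarith : (0:ℝ) ≤ 1 - v)]

lemma phi_le (y : ℝ) (h0 : 0 ≤ y) (h1 : y ≤ 1) : phi y ≤ y * (1 - y) := by
  rcases lt_or_eq_of_le h1 with h | h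
  · unfold phi; rw [Int.fract_eq_self.2 ⟨h0, h⟩]
  · unfold phi; rw [h, show Int.fract (1:ℝ) = 0 by norm_num [Int.fract]]; norm_num

lemma phi_sum {ι : Type*} [DecidableEq ι] (s : Finset ι) (g : ι → ℝ)
    (hg : ∀ i ∈ s, 0 ≤ g i ∧ g i ≤ 1) :
    phi (∑ i ∈ s, g i) ≤ ∑ i ∈ s, g i * (1 - g i) := by
  induction s using Finset.induction_on with
  | empty => simp [phi, Int.fract]
  | @insert a s' h ih =>
    rw [Finset.sum_insert h, Finset.sum_insert h]
    calc phi (g a + ∑ i ∈ s', g i) ≤ phi (g a) + phi (∑ i ∈ s', g i) := phi_subadd _ _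
      _ ≤ g a * (1 - g a) + ∑ i ∈ s', g i * (1 - g i) := by
          have := hg a (Finset.mem_insert_self a s')
          exact add_le_add (phi_le _ this.1 this.2)
            (ih fun i hi => hg i (Finset.mem_insert_of_mem hi))

/-- For every `x ∈ [0,1]^n` with mean `c`, `var x ≤ c(1-c) - a(1-a)/n`,
where `a` is the fractional part of `n * c`. -/
theorem stmt_4 (n : ℕ) (hn : 0 < n) (c : ℝ) (x : Fin n → ℝ)
    (hx : ∀ i, 0 ≤ x i ∧ x i ≤ 1)
    (hmean : (∑ i, x i) / n = c) :
    (∑ i, x i ^ 2) / n - c ^ 2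
      ≤ c * (1 - c) - Int.fract (n * c) * (1 - Int.fract (n * c)) / n := by
  have hn' : (0:ℝ) < n := by exact_mod_cast hn
  have hsum : (∑ i, x i) = n * c := by
    field_simp at hmean; linarith
  have key : phi (n * c) ≤ ∑ i, x i * (1 - x i) := by
    rw [← hsum]; exact phi_sum _ _ fun i _ => hx i
  have hsq : (∑ i, x i ^ 2) = (∑ i, x i) - ∑ i, x i * (1 - x i) := by
    rw [← Finset.sum_sub_distrib]; apply Finset.sum_congr rfl; intros; ring
  have h2 : (∑ i, x i ^ 2) ≤ n * c - phi (n * c) := by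
    rw [hsq, hsum]; linarith
  have h3 : (∑ i, x i ^ 2) / n ≤ (n * c - phi (n * c)) / n :=
    (div_le_div_iff_of_pos_right hn').2 h2
  have h4 : (n * c - phi (n * c)) / n = c - phi (n * c) / n := by
    field_simp
  have hphi : phi (n * c) = Int.fract (n * c) * (1 - Int.fract (n * c)) := rfl
  rw [← hphi]
  nlinarith [h3, h4]
end

section
/- For every n ≥ 1 and c ∈ [0,1] there exists x ∈ [0,1]^n with mean c and var(x) = c(1-c) - a(1-a)/n, where a is the fractional part of n·c. -/
lemma aux_sum (n m : ℕ) (v w : ℝ) (hmn : m ≤ n) :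
    (∑ i ∈ Finset.range n, (if i < m then v else if i = m then w else 0))
      = m * v + (if m < n then w else 0) := by
  induction n with
  | zero =>
    simp [Nat.le_zero.mp hmn]
  | succ n ih =>
    rw [Finset.sum_range_succ]
    rcases eq_or_lt_of_le hmn with he | hl
    · -- m = n + 1
      have h1 : ∀ i ∈ Finset.range n, (if i < m then v else if i = m then w else 0) = v := by
        intro i hi
        rw [if_pos]
        rw [Finset.mem_range] at hi
        omega
      rw [Finset.sum_congr rfl h1, Finset.sum_const, Finset.card_range, nsmul_eq_mul]
      have h2 : (if n < m then v else if n = m then w else 0) = v := by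
        rw [if_pos]; omega
      rw [h2, if_neg (by omega)]
      have : (m : ℝ) = n + 1 := by exact_mod_cast he
      rw [this]; ring
    · have hmn' : m ≤ n := Nat.lt_succ_iff.mp hl
      rw [ih hmn']
      rcases eq_or_lt_of_le hmn' with he | hl'
      · subst he
        simp [lt_irrefl]
      · rw [if_pos hl', if_pos hl, if_neg (show ¬ n < m by omega),
          if_neg (show ¬ n = m by omega)]
        ring

/-- For every `n ≥ 1` and `c ∈ [0,1]` there exists a dataset in `[0,1]^n` with mean `c`
whose variance equals `c(1-c) - a(1-a)/n`, where `a` is the fractional part of `n*c`. -/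
theorem stmt_5 (n : ℕ) (hn : 1 ≤ n) (c : ℝ) (hc : c ∈ Set.Icc (0:ℝ) 1) :
    ∃ x : Fin n → ℝ, (∀ i, x i ∈ Set.Icc (0:ℝ) 1) ∧ (∑ i, x i) / n = c ∧
      (∑ i, (x i - c) ^ 2) / n
        = c * (1 - c) - Int.fract (n * c) * (1 - Int.fract (n * c)) / n := by
  obtain ⟨hc0, hc1⟩ := hc
  have hn0 : (0:ℝ) < n := by exact_mod_cast hn
  set a : ℝ := Int.fract ((n:ℝ) * c) with ha_def
  set m : ℕ := (⌊(n:ℝ) * c⌋).toNat with hm_def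
  have hnc0 : (0:ℝ) ≤ (n:ℝ) * c := by positivity
  have hfl0 : (0:ℤ) ≤ ⌊(n:ℝ) * c⌋ := Int.floor_nonneg.2 hnc0
  have hmcast : (m : ℝ) = (⌊(n:ℝ) * c⌋ : ℤ) := by
    rw [hm_def]
    exact_mod_cast congrArg (fun z : ℤ => (z : ℝ)) (Int.toNat_of_nonneg hfl0)
  have hma : (m : ℝ) + a = (n:ℝ) * c := by
    rw [ha_def, hmcast, Int.fract]; ring
  have ha0 : 0 ≤ a := Int.fract_nonneg _
  have ha1 : a < 1 := Int.fract_lt_one _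
  have hmn : m ≤ n := by
    have hle : (n:ℝ) * c ≤ (((n:ℤ)):ℝ) := by
      push_cast
      nlinarith
    have h2 : ⌊(n:ℝ) * c⌋ ≤ (n : ℤ) := by
      have := Int.floor_le_floor hle
      rwa [Int.floor_intCast] at this
    rw [hm_def]
    omega
  have key : ¬ m < n → a = 0 := by
    intro h
    have hmeq : m = n := by omega
    have : (n:ℝ) + a = (n:ℝ) * c := by rw [← hma, hmeq]
    have hle : a ≤ 0 := by nlinarith
    linarith
  refine ⟨fun i => if (i:ℕ) < m then 1 else if (i:ℕ) = m then a else 0, ?_, ?_, ?_⟩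
  · intro i
    dsimp only
    split
    · exact ⟨zero_le_one, le_refl 1⟩
    split
    · exact ⟨ha0, le_of_lt ha1⟩
    · exact ⟨le_refl 0, zero_le_one⟩
  · have hs : (∑ i : Fin n, if (i:ℕ) < m then (1:ℝ) else if (i:ℕ) = m then a else 0)
        = (m:ℝ) * 1 + (if m < n then a else 0) := by
      rw [Fin.sum_univ_eq_sum_range (fun i => if i < m then (1:ℝ) else if i = m then a else 0)]
      exact aux_sum n m 1 a hmn
    rw [hs]
    have hsum : (m:ℝ) * 1 + (if m < n then a else 0) = (n:ℝ) * c := by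
      by_cases h : m < n
      · rw [if_pos h]; linarith [hma]
      · have ha' := key h
        rw [ha'] at hma
        rw [if_neg h]
        linarith [hma]
    rw [hsum]
    field_simp
  · have hm' : (m:ℝ) = (n:ℝ)*c - a := by linarith [hma]
    have hS1 : (∑ i : Fin n, if (i:ℕ) < m then (1:ℝ) else if (i:ℕ) = m then a else 0)
        = (n:ℝ) * c := by
      rw [Fin.sum_univ_eq_sum_range (fun i => if i < m then (1:ℝ) else if i = m then a else 0),
        aux_sum n m 1 a hmn]
      by_cases h : m < n
      · rw [if_pos h]; linarith [hma]
      · have ha' := key h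
        rw [ha'] at hma
        rw [if_neg h]
        linarith [hma]
    have hS2 : (∑ i : Fin n, if (i:ℕ) < m then (1:ℝ) else if (i:ℕ) = m then a^2 else 0)
        = (m:ℝ) + a^2 := by
      rw [Fin.sum_univ_eq_sum_range (fun i => if i < m then (1:ℝ) else if i = m then a^2 else 0),
        aux_sum n m 1 (a^2) hmn]
      by_cases h : m < n
      · rw [if_pos h]; ring
      · rw [if_neg h, key h]; ring
    have hpt : ∀ i : Fin n,
        ((if (i:ℕ) < m then (1:ℝ) else if (i:ℕ) = m then a else 0) - c) ^ 2
          = (if (i:ℕ) < m then (1:ℝ) else if (i:ℕ) = m then a^2 else 0)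
            - 2*c*(if (i:ℕ) < m then (1:ℝ) else if (i:ℕ) = m then a else 0) + c^2 := by
      intro i; split_ifs <;> ring
    rw [Finset.sum_congr rfl (fun i _ => hpt i)]
    rw [Finset.sum_add_distrib, Finset.sum_sub_distrib, ← Finset.mul_sum,
      Finset.sum_const, Finset.card_univ, Fintype.card_fin, nsmul_eq_mul,
      hS1, hS2, hm']
    field_simp
    ring
end

section
/- If x ∈ [0,1]^n has mean c, then c(1-c) - 1/(4n) ≤ M ≤ c(1-c), where M is the maximum variance over all datasets in [0,1]^n with mean c. -/
/-- If some dataset in `[0,1]^n` has mean `c`, then the supremum `M` of the variances of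
such datasets satisfies `c(1-c) - 1/(4n) ≤ M ≤ c(1-c)`. -/
theorem stmt_6 (n : ℕ) (hn : 1 ≤ n) (c : ℝ) (x : Fin n → ℝ)
    (hx : ∀ i, x i ∈ Set.Icc (0:ℝ) 1) (hmean : (∑ i, x i) / n = c) :
    c * (1 - c) - 1 / (4 * n)
        ≤ sSup {v : ℝ | ∃ y : Fin n → ℝ, (∀ i, y i ∈ Set.Icc (0:ℝ) 1) ∧
            (∑ i, y i) / n = c ∧ v = (∑ i, (y i - c) ^ 2) / n} ∧
      sSup {v : ℝ | ∃ y : Fin n → ℝ, (∀ i, y i ∈ Set.Icc (0:ℝ) 1) ∧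
            (∑ i, y i) / n = c ∧ v = (∑ i, (y i - c) ^ 2) / n} ≤ c * (1 - c) := by
  have hn0 : (0:ℝ) < n := by exact_mod_cast hn
  set S : Set ℝ := {v : ℝ | ∃ y : Fin n → ℝ, (∀ i, y i ∈ Set.Icc (0:ℝ) 1) ∧
            (∑ i, y i) / n = c ∧ v = (∑ i, (y i - c) ^ 2) / n} with hS
  -- c is in [0,1]
  have hc0 : 0 ≤ c := by
    rw [← hmean]
    apply div_nonneg _ hn0.le
    exact Finset.sum_nonneg fun i _ => (hx i).1
  have hc1 : c ≤ 1 := by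
    rw [← hmean, div_le_one hn0]
    calc ∑ i, x i ≤ ∑ _i : Fin n, (1:ℝ) := Finset.sum_le_sum fun i _ => (hx i).2
      _ = n := by simp
  -- every element of S is ≤ c(1-c)
  have hub : ∀ v ∈ S, v ≤ c * (1 - c) := by
    rintro v ⟨y, hy, hmy, rfl⟩
    have hsum : ∑ i, y i = (n:ℝ) * c := by
      field_simp at hmy; linarith
    have h1 : ∑ i, (y i - c)^2 ≤ (n:ℝ) * c - n * c^2 := by
      have key : ∀ i, (y i - c)^2 ≤ y i - 2*c*(y i) + c^2 := by
        intro i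
        have h1 := (hy i).1; have h2 := (hy i).2
        nlinarith
      calc ∑ i, (y i - c)^2 ≤ ∑ i, (y i - 2*c*(y i) + c^2) :=
            Finset.sum_le_sum fun i _ => key i
        _ = (n:ℝ) * c - n * c^2 := by
            rw [Finset.sum_add_distrib, Finset.sum_sub_distrib, ← Finset.mul_sum, hsum]
            simp [Finset.card_univ]
            ring
    have h2 : (∑ i, (y i - c)^2) / n ≤ ((n:ℝ)*c - n*c^2)/n := by gcongr
    have h3 : ((n:ℝ)*c - n*c^2)/n = c * (1-c) := by field_simp
    simpa [h3] using h2
  refine ⟨?_, Real.sSup_le hub (by nlinarith)⟩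
  -- lower bound: construct extremal dataset
  set s : ℝ := (n:ℝ) * c with hs_def
  have hs0 : 0 ≤ s := by positivity
  have hsn : s ≤ n := by nlinarith
  set k : ℕ := ⌊s⌋₊ with hk_def
  have hk1 : (k:ℝ) ≤ s := Nat.floor_le hs0
  have hk2 : s < k + 1 := Nat.lt_floor_add_one s
  set a : ℝ := s - k with ha_def
  have ha0 : 0 ≤ a := by simp [ha_def]; linarith
  have ha1 : a < 1 := by simp [ha_def]; linarith
  have hkn : k ≤ n := by
    have : (k:ℝ) ≤ n := le_trans hk1 hsn
    exact_mod_cast this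
  set y : Fin n → ℝ := fun i => if (i:ℕ) < k then (1:ℝ) else if (i:ℕ) = k then a else 0 with hy_def
  have hymem : ∀ i, y i ∈ Set.Icc (0:ℝ) 1 := by
    intro i
    simp only [hy_def]
    split_ifs <;> constructor <;> linarith
  have hdec : ∀ i : Fin n, y i = (if (i:ℕ) < k then (1:ℝ) else 0) + (if (i:ℕ) = k then a else 0) := by
    intro i
    simp only [hy_def]
    split_ifs <;> first | omega | ring
  have hdecsq : ∀ i : Fin n, y i ^ 2 = (if (i:ℕ) < k then (1:ℝ) else 0) + (if (i:ℕ) = k then a^2 else 0) := by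
    intro i
    simp only [hy_def]
    split_ifs <;> first | omega | ring
  have hs1 : ∑ i : Fin n, (if (i:ℕ) < k then (1:ℝ) else 0) = k := by
    rw [Fin.sum_univ_eq_sum_range (fun j => if j < k then (1:ℝ) else 0)]
    rw [Finset.sum_ite, Finset.sum_const, Finset.sum_const]
    have hfilter : (Finset.range n).filter (fun j => j < k) = Finset.range k := by
      ext j; simp; omega
    simp [hfilter]
  have hs2 : ∑ i : Fin n, (if (i:ℕ) = k then a else 0) = if k < n then a else 0 := by
    rw [Fin.sum_univ_eq_sum_range (fun j => if j = k then a else 0)]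
    rw [Finset.sum_ite_eq' (Finset.range n) k (fun _ => a)]
    simp [Finset.mem_range]
  have hs2' : ∑ i : Fin n, (if (i:ℕ) = k then a^2 else 0) = if k < n then a^2 else 0 := by
    rw [Fin.sum_univ_eq_sum_range (fun j => if j = k then a^2 else 0)]
    rw [Finset.sum_ite_eq' (Finset.range n) k (fun _ => a^2)]
    simp [Finset.mem_range]
  -- the degenerate case k = n forces a = 0
  have hcase : ¬ k < n → a = 0 := by
    intro h
    have hkn' : k = n := le_antisymm hkn (not_lt.mp h)
    have : (k:ℝ) = n := by exact_mod_cast hkn'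
    simp [ha_def]; linarith
  have hsum : ∑ i, y i = (n:ℝ) * c := by
    rw [Finset.sum_congr rfl (fun i _ => hdec i), Finset.sum_add_distrib, hs1, hs2]
    by_cases h : k < n
    · simp only [if_pos h]
      simp [ha_def, hs_def]
    · have := hcase h
      simp only [if_neg h]
      simp [hs_def] at this ⊢
      linarith [this]
  have hsumsq : ∑ i, y i ^ 2 = (k:ℝ) + a^2 := by
    rw [Finset.sum_congr rfl (fun i _ => hdecsq i), Finset.sum_add_distrib, hs1, hs2']
    by_cases h : k < n
    · simp [h]
    · have := hcase h
      simp [h, this]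
  have hvar : ∑ i, (y i - c)^2 = (k:ℝ) + a^2 - n * c^2 := by
    have e : ∀ i : Fin n, (y i - c)^2 = y i ^2 - 2*c*(y i) + c^2 := fun i => by ring
    rw [Finset.sum_congr rfl (fun i _ => e i), Finset.sum_add_distrib,
      Finset.sum_sub_distrib, ← Finset.mul_sum, hsum, hsumsq]
    simp [Finset.card_univ]
    ring
  have hmemS : (∑ i, (y i - c)^2) / n ∈ S := ⟨y, hymem, by rw [hsum]; field_simp, rfl⟩
  have hbdd : BddAbove S := ⟨c * (1-c), hub⟩
  have hle : c * (1 - c) - 1 / (4 * n) ≤ (∑ i, (y i - c)^2) / n := by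
    rw [hvar]
    rw [sub_le_iff_le_add, div_add_div _ _ hn0.ne' (by positivity : (4:ℝ)*n ≠ 0), le_div_iff₀ (by positivity)]
    have hka : (k:ℝ) = n * c - a := by simp [ha_def, hs_def]
    rw [hka]
    nlinarith [mul_nonneg hn0.le (sq_nonneg (2*a - 1))]
  exact le_trans hle (le_csSup hbdd hmemS)
end

section
/- For any x ∈ [0,1]^n, ∑ x_i² ≤ ∑ x_i - a(1-a), where a is the fractional part of ∑ x_i. -/
lemma key_frac (a t : ℝ) (ha : 0 ≤ a) (ha1 : a < 1) (ht : 0 ≤ t) (ht1 : t ≤ 1) :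
    Int.fract (a + t) * (1 - Int.fract (a + t)) ≤ a * (1 - a) + t * (1 - t) := by
  rcases lt_or_ge (a + t) 1 with h | h
  · rw [Int.fract_eq_self.mpr ⟨by linarith, h⟩]; nlinarith
  · have he : Int.fract (a + t) = a + t - 1 := by
      have hf : ⌊a + t⌋ = 1 := by
        rw [Int.floor_eq_iff]
        constructor <;> push_cast <;> linarith
      simp [Int.fract, hf]
    rw [he]; nlinarith [mul_nonneg (sub_nonneg.2 ha1.le) (sub_nonneg.2 ht1)]

lemma aux_frac : ∀ (n : ℕ) (x : Fin n → ℝ), (∀ i, 0 ≤ x i ∧ x i ≤ 1) →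
    Int.fract (∑ i, x i) * (1 - Int.fract (∑ i, x i)) ≤ ∑ i, x i * (1 - x i) := by
  intro n
  induction n with
  | zero => intro x hx; simp
  | succ m ih =>
    intro x hx
    rw [Fin.sum_univ_castSucc (f := x), Fin.sum_univ_castSucc (f := fun i => x i * (1 - x i))]
    set T := ∑ i : Fin m, x (Fin.castSucc i) with hT
    set t := x (Fin.last m) with ht
    have hfr : Int.fract (T + t) = Int.fract (Int.fract T + t) := by
      conv_lhs => rw [(Int.floor_add_fract T).symm]
      rw [add_assoc, Int.fract_intCast_add]
    rw [hfr]
    have h1 := key_frac (Int.fract T) t (Int.fract_nonneg T) (Int.fract_lt_one T)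
      (hx (Fin.last m)).1 (hx (Fin.last m)).2
    have h2 := ih (fun i => x (Fin.castSucc i)) (fun i => hx _)
    calc Int.fract (Int.fract T + t) * (1 - Int.fract (Int.fract T + t))
        ≤ Int.fract T * (1 - Int.fract T) + t * (1 - t) := h1
      _ ≤ (∑ i : Fin m, x (Fin.castSucc i) * (1 - x (Fin.castSucc i))) + t * (1 - t) := by
          linarith
      _ = _ := rfl

/-- For `x ∈ [0,1]^n`, `∑ xᵢ² ≤ ∑ xᵢ - a(1-a)` where `a` is the fractional part of `∑ xᵢ`. -/
theorem stmt_7 (n : ℕ) (x : Fin n → ℝ) (hx : ∀ i, 0 ≤ x i ∧ x i ≤ 1) :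
    ∑ i, x i ^ 2
      ≤ ∑ i, x i - Int.fract (∑ i, x i) * (1 - Int.fract (∑ i, x i)) := by
  have h := aux_frac n x hx
  have hs : ∑ i, x i * (1 - x i) = ∑ i, x i - ∑ i, x i ^ 2 := by
    rw [← Finset.sum_sub_distrib]
    apply Finset.sum_congr rfl
    intro i _; ring
  linarith [hs ▸ h]
end

section
/- For any x ∈ [m,M]^n with mean c, var(x) ≤ (M - c)(c - m). -/
/-- Bhatia–Davis inequality for finite datasets. -/
theorem stmt_9 (n : ℕ) (hn : 0 < n) (m M c : ℝ) (x : Fin n → ℝ)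
    (hx : ∀ i, m ≤ x i ∧ x i ≤ M) (hmean : (∑ i, x i) / n = c) :
    (∑ i, (x i - c) ^ 2) / n ≤ (M - c) * (c - m) := by
  have hn' : (0:ℝ) < n := by exact_mod_cast hn
  have hc : (∑ i, x i) = n * c := by
    field_simp at hmean; linarith
  have hterm : ∀ i, (x i - c) ^ 2 ≤ (M + m - 2*c) * x i + (c^2 - M*m) := by
    intro i
    obtain ⟨h1, h2⟩ := hx i
    nlinarith [mul_nonneg (sub_nonneg.2 h2) (sub_nonneg.2 h1)]
  have hsum : (∑ i, (x i - c) ^ 2) ≤ ∑ i, ((M + m - 2*c) * x i + (c^2 - M*m)) :=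
    Finset.sum_le_sum fun i _ => hterm i
  have hrhs : ∑ i, ((M + m - 2*c) * x i + (c^2 - M*m)) = n * ((M - c) * (c - m)) := by
    rw [Finset.sum_add_distrib, ← Finset.mul_sum, hc]
    simp [Finset.sum_const, Finset.card_univ]
    ring
  rw [div_le_iff₀ hn']
  calc (∑ i, (x i - c) ^ 2) ≤ n * ((M - c) * (c - m)) := by rw [← hrhs]; exact hsum
    _ = (M - c) * (c - m) * n := by ring
end

section
/- Let n ≥ 1, k an integer with 0 ≤ k ≤ n-1, and a ∈ [0,1). Consider the dataset with k entries equal to 1, one entry equal to a, and n-k-1 entries equal to 0; its mean is c = (k+a)/n and its variance equals c(1-c) - a(1-a)/n. -/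
lemma aux_sum_13 (n k : ℕ) (hkn : k < n) (p q r : ℝ) :
    ∑ i ∈ Finset.range n, (if i < k then p else if i = k then q else r)
      = k * p + q + ((n - k - 1 : ℕ) : ℝ) * r := by
  rw [Finset.range_eq_Ico, ← Finset.sum_Ico_consecutive _ (Nat.zero_le k) hkn.le,
    ← Finset.sum_Ico_consecutive _ (Nat.le_succ k) hkn]
  have h1 : ∑ i ∈ Finset.Ico 0 k, (if i < k then p else if i = k then q else r) = k * p := by
    have e : ∀ i ∈ Finset.Ico 0 k, (if i < k then p else if i = k then q else r) = p := by
      intro i hi; simp only [Finset.mem_Ico] at hi; simp [hi.2]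
    rw [Finset.sum_congr rfl e, Finset.sum_const, Nat.card_Ico, nsmul_eq_mul]
    simp
  have h2 : ∑ i ∈ Finset.Ico k (k+1), (if i < k then p else if i = k then q else r) = q := by
    simp
  have h3 : ∑ i ∈ Finset.Ico (k+1) n, (if i < k then p else if i = k then q else r)
      = ((n - k - 1 : ℕ) : ℝ) * r := by
    have e : ∀ i ∈ Finset.Ico (k+1) n, (if i < k then p else if i = k then q else r) = r := by
      intro i hi; simp only [Finset.mem_Ico] at hi
      have h1 : ¬ i < k := by omega
      have h2 : ¬ i = k := by omega
      simp [h1, h2]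
    rw [Finset.sum_congr rfl e, Finset.sum_const, Nat.card_Ico, nsmul_eq_mul, Nat.sub_sub]
  rw [h1, h2, h3]; ring

/-- The dataset with `k` entries equal to `1`, one entry equal to `a` and the remaining
`n - k - 1` entries equal to `0` has mean `c = (k + a)/n` and variance
`c(1-c) - a(1-a)/n`. -/
theorem stmt_13 (n k : ℕ) (hn : 1 ≤ n) (hk : k ≤ n - 1) (a : ℝ) (ha : 0 ≤ a) (ha1 : a < 1)
    (x : Fin n → ℝ)
    (hx : ∀ i : Fin n, x i = if (i : ℕ) < k then 1 else if (i : ℕ) = k then a else 0) :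
    (∑ i, x i) / n = ((k : ℝ) + a) / n ∧
    (∑ i, (x i - ((k : ℝ) + a) / n) ^ 2) / n
      = (((k : ℝ) + a) / n) * (1 - ((k : ℝ) + a) / n) - a * (1 - a) / n := by
  have hkn : k < n := by omega
  have hn0 : (n : ℝ) ≠ 0 := Nat.cast_ne_zero.mpr (by omega)
  set c : ℝ := ((k : ℝ) + a) / n with hc
  have hsub : ((n - k - 1 : ℕ) : ℝ) = (n : ℝ) - k - 1 := by
    push_cast [Nat.sub_sub]
    rw [Nat.cast_sub (by omega)]
    push_cast; ring
  have h1 : (∑ i, x i) = (k : ℝ) + a := by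
    rw [Finset.sum_congr rfl (fun i _ => hx i), Fin.sum_univ_eq_sum_range
      (fun i => if i < k then (1:ℝ) else if i = k then a else 0), aux_sum_13 n k hkn]
    simp
  have h2 : (∑ i, (x i - c) ^ 2)
      = k * (1 - c)^2 + (a - c)^2 + ((n:ℝ) - k - 1) * c^2 := by
    have : ∀ i : Fin n, (x i - c)^2
        = if (i:ℕ) < k then (1-c)^2 else if (i:ℕ) = k then (a-c)^2 else c^2 := by
      intro i
      rw [hx i]
      split_ifs <;> ring
    rw [Finset.sum_congr rfl (fun i _ => this i), Fin.sum_univ_eq_sum_range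
      (fun i => if i < k then (1-c)^2 else if i = k then (a-c)^2 else c^2),
      aux_sum_13 n k hkn, hsub]
  refine ⟨by rw [h1], ?_⟩
  rw [h2, hc]
  field_simp
  ring
end
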